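/- arXiv:2306.12035 — 8 statements merged into one kernel-verified Lean document; each statement's English description precedes it below -/
import Mathlib

section
/- Let 𝔉 be a formation, G a finite group, N ⊴ G, and H a K𝔉-subnormal subgroup of G. Then HN/N is K𝔉-subnormal in G/N, and HN is K𝔉-subnormal in G. -/
universe u

/-- A class of groups is subgroup-closed if it is closed under taking subgroups. -/
def IsSubgroupClosed (F : ∀ (G : Type u) [Group G], Prop) : Prop :=
  ∀ (G : Type u) [Group G] (H : Subgroup G), F G → F H

/-- A formation: a class of groups closed under isomorphisms, quotients and
subdirect products. -/
structure IsFormation (F : ∀ (G : Type u) [Group G], Prop) : Prop where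
  iso : ∀ (G H : Type u) [Group G] [Group H], G ≃* H → F G → F H
  quot : ∀ (G : Type u) [Group G] (N : Subgroup G) (_ : N.Normal), F G → F (G ⧸ N)
  subdirect : ∀ (G : Type u) [Group G] (N₁ N₂ : Subgroup G) (_ : N₁.Normal) (_ : N₂.Normal),
    F (G ⧸ N₁) → F (G ⧸ N₂) → N₁ ⊓ N₂ = ⊥ → F G

/-- The 𝔉-fResidual of `G`: the smallest normal subgroup with quotient in `F`. -/
def fResidual (F : ∀ (G : Type u) [Group G], Prop) (G : Type u) [Group G] : Subgroup G :=
  sInf {N : Subgroup G | ∃ _ : N.Normal, F (G ⧸ N)}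

/-- `KSubnormal F H K` : there is a chain `H = H₀ ≤ … ≤ Hₙ = K` of subgroups of `G`
such that each `Hᵢ` is normal in `Hᵢ₊₁` or contains the `F`-fResidual of `Hᵢ₊₁`. -/
inductive KSubnormal (F : ∀ (G : Type u) [Group G], Prop) {G : Type u} [Group G] :
    Subgroup G → Subgroup G → Prop
  | refl (H : Subgroup G) : KSubnormal F H H
  | step {H K L : Subgroup G} : KSubnormal F H K → K ≤ L →
      ((K.subgroupOf L).Normal ∨ fResidual F ↥L ≤ K.subgroupOf L) → KSubnormal F H L

/-- `M` is a modular element of the subgroup lattice of `G`. -/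
def IsModularSubgroup {G : Type u} [Group G] (M : Subgroup G) : Prop :=
  (∀ X Y : Subgroup G, X ≤ Y → (X ⊔ M) ⊓ Y = X ⊔ (M ⊓ Y)) ∧
  (∀ X Y : Subgroup G, M ≤ Y → (M ⊔ X) ⊓ Y = M ⊔ (X ⊓ Y))

/-- `Submodular H K` : a chain from `H` to `K` with each term modular in the next. -/
inductive Submodular {G : Type u} [Group G] : Subgroup G → Subgroup G → Prop
  | refl (H : Subgroup G) : Submodular H H
  | step {H K L : Subgroup G} : Submodular H K → K ≤ L →
      IsModularSubgroup (K.subgroupOf L) → Submodular H L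

/-- `SubnormalIn H K` : a chain from `H` to `K` with each term normal in the next. -/
inductive SubnormalIn {G : Type u} [Group G] : Subgroup G → Subgroup G → Prop
  | refl (H : Subgroup G) : SubnormalIn H H
  | step {H K L : Subgroup G} : SubnormalIn H K → K ≤ L →
      (K.subgroupOf L).Normal → SubnormalIn H L

/-- A group is supersolvable if it has a normal series with cyclic factors:
each term is normal in `G` and each successive term is generated by the previous
one together with a single element. -/
def IsSupersolvable (G : Type u) [Group G] : Prop :=
  ∃ (n : ℕ) (s : Fin (n + 1) → Subgroup G), s 0 = ⊥ ∧ s (Fin.last n) = ⊤ ∧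
    (∀ i, (s i).Normal) ∧
    ∀ i : Fin n, ∃ g : G, s i.succ = s i.castSucc ⊔ Subgroup.zpowers g

/-- The class 𝔘₁ of supersolvable groups of square-free exponent. -/
def U1 : ∀ (G : Type u) [Group G], Prop := fun G _ =>
  IsSupersolvable G ∧ Squarefree (Monoid.exponent G)

/-- The solvable radical: the largest normal solvable subgroup. -/
def solvRad (G : Type u) [Group G] : Subgroup G :=
  sSup {N : Subgroup G | N.Normal ∧ IsSolvable ↥N}

/-- The Fitting subgroup: the largest normal nilpotent subgroup. -/
def fitting (G : Type u) [Group G] : Subgroup G :=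
  sSup {N : Subgroup G | N.Normal ∧ Group.IsNilpotent ↥N}

/-!
Both halves follow from the behaviour of 𝔉-residuals under a surjection `f : G → Q`: the
residual of `Q` lies in the image of the residual of `G` (for finite `G`, where `G ⧸ G^𝔉` is
itself in `𝔉` by closure under subdirect products), and the residual of `G` lies in the
preimage of the residual of `Q`. Applying this to the restrictions `L → f L` of a
homomorphism and `f⁻¹ L → L` of a surjection, term by term along a chain, shows that images
and preimages of K𝔉-subnormal chains are again K𝔉-subnormal chains. Now `HN/N` is the image of
`H` in `G/N`, and `HN` is the preimage of `HN/N`.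
-/

open Subgroup QuotientGroup

variable {F : ∀ (G : Type u) [Group G], Prop} {G Q : Type u} [Group G] [Group Q]

namespace IsFormation

theorem of_surjective (hF : IsFormation F) {f : G →* Q} (hf : Function.Surjective f)
    (hG : F G) : F Q :=
  hF.iso _ _ (quotientKerEquivOfSurjective f hf) (hF.quot _ _ inferInstance hG)

theorem quotient_comap (hF : IsFormation F) {f : G →* Q} (hf : Function.Surjective f)
    (N : Subgroup Q) [N.Normal] (h : F (Q ⧸ N)) : F (G ⧸ N.comap f) := by
  have hker : N.comap f = ((mk' N).comp f).ker := by rw [← MonoidHom.comap_ker, ker_mk']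
  exact hF.iso _ _ ((quotientMulEquivOfEq hker).trans
    (quotientKerEquivOfSurjective _ ((mk'_surjective N).comp hf))).symm h

theorem quotient_inf (hF : IsFormation F) {N₁ N₂ : Subgroup G} [N₁.Normal] [N₂.Normal]
    (h₁ : F (G ⧸ N₁)) (h₂ : F (G ⧸ N₂)) : F (G ⧸ (N₁ ⊓ N₂)) := by
  set M := N₁ ⊓ N₂
  refine hF.subdirect _ (N₁.map (mk' M)) (N₂.map (mk' M))
    (Normal.map inferInstance _ (mk'_surjective M)) (Normal.map inferInstance _ (mk'_surjective M))
    (hF.iso _ _ (quotientQuotientEquivQuotient M N₁ inf_le_left).symm h₁)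
    (hF.iso _ _ (quotientQuotientEquivQuotient M N₂ inf_le_right).symm h₂) ?_
  apply comap_injective (mk'_surjective M)
  rw [comap_inf, comap_map_mk', comap_map_mk', sup_of_le_right inf_le_left,
    sup_of_le_right inf_le_right, MonoidHom.comap_bot, ker_mk']

end IsFormation

instance fResidual_normal : (fResidual F G).Normal := by
  rw [fResidual, sInf_eq_iInf']
  exact normal_iInf_normal fun N => N.2.1

theorem fResidual_le {N : Subgroup G} [hN : N.Normal] (h : F (G ⧸ N)) : fResidual F G ≤ N :=
  sInf_le (s := {N : Subgroup G | ∃ _ : N.Normal, F (G ⧸ N)}) ⟨hN, h⟩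

theorem quotient_fResidual (hF : IsFormation F) [Finite G] {N : Subgroup G} [hN : N.Normal]
    (h : F (G ⧸ N)) : F (G ⧸ fResidual F G) := by
  let S : Set (Subgroup G) := {N | ∃ _ : N.Normal, F (G ⧸ N)}
  have hclosed : InfClosed S := fun _ ⟨_, h₁⟩ _ ⟨_, h₂⟩ => ⟨inferInstance, hF.quotient_inf h₁ h₂⟩
  obtain ⟨_, hres⟩ := hclosed.sInf_mem_of_nonempty S.toFinite ⟨N, hN, h⟩ subset_rfl
  exact hres

theorem fResidual_le_map (hF : IsFormation F) [Finite G] {f : G →* Q}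
    (hf : Function.Surjective f) : fResidual F Q ≤ (fResidual F G).map f := by
  by_cases hG : ∃ (N : Subgroup G) (_ : N.Normal), F (G ⧸ N)
  · obtain ⟨N, _, h⟩ := hG
    have : ((fResidual F G).map f).Normal := Normal.map inferInstance f hf
    exact fResidual_le <| hF.of_surjective
      (map_surjective_of_surjective _ _ f ((mk'_surjective _).comp hf) (le_comap_map f _))
      (quotient_fResidual hF h)
  · have htop : fResidual F G = ⊤ := sInf_eq_top.2 fun N hN => (hG ⟨N, hN⟩).elim
    rw [htop, map_top_of_surjective f hf]
    exact le_top

theorem fResidual_le_comap (hF : IsFormation F) {f : G →* Q} (hf : Function.Surjective f) :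
    fResidual F G ≤ (fResidual F Q).comap f :=
  map_le_iff_le_comap.1 <| le_sInf fun N ⟨_, h⟩ =>
    map_le_iff_le_comap.2 (fResidual_le (hF.quotient_comap hf N h))

theorem Subgroup.map_subgroupOf_le_subgroupOf_map (f : G →* Q) (K L : Subgroup G) :
    (K.subgroupOf L).map (f.subgroupMap L) ≤ (K.map f).subgroupOf (L.map f) := by
  rintro _ ⟨x, hx, rfl⟩
  exact ⟨x, hx, rfl⟩

namespace KSubnormal

theorem map (hF : IsFormation F) [Finite G] (f : G →* Q) {H K : Subgroup G}
    (h : KSubnormal F H K) : KSubnormal F (H.map f) (K.map f) := by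
  induction h with
  | refl => exact .refl _
  | @step K L _ hKL hstep ih =>
    refine ih.step (map_mono hKL) (hstep.imp (fun hnormal => ?_) (fun hres => ?_))
    · rw [normal_subgroupOf_iff_le_normalizer hKL] at hnormal
      rw [normal_subgroupOf_iff_le_normalizer (map_mono hKL)]
      exact (map_mono hnormal).trans (le_normalizer_map f)
    · calc fResidual F (L.map f)
          ≤ (fResidual F L).map (f.subgroupMap L) :=
            fResidual_le_map hF (f.subgroupMap_surjective L)
        _ ≤ (K.subgroupOf L).map (f.subgroupMap L) := map_mono hres
        _ ≤ (K.map f).subgroupOf (L.map f) := Subgroup.map_subgroupOf_le_subgroupOf_map f K L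

theorem comap (hF : IsFormation F) {f : G →* Q} (hf : Function.Surjective f)
    {H K : Subgroup Q} (h : KSubnormal F H K) : KSubnormal F (H.comap f) (K.comap f) := by
  induction h with
  | refl => exact .refl _
  | @step K L _ hKL hstep ih =>
    refine ih.step (comap_mono hKL) (hstep.imp (fun hnormal => ?_) (fun hres => ?_))
    · rw [normal_subgroupOf_iff_le_normalizer hKL] at hnormal
      rw [normal_subgroupOf_iff_le_normalizer (comap_mono hKL)]
      exact (comap_mono hnormal).trans (le_normalizer_comap f)
    · calc fResidual F (L.comap f)
          ≤ (fResidual F L).comap (f.subgroupComap L) :=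
            fResidual_le_comap hF (f.subgroupComap_surjective_of_surjective L hf)
        -- this preimage is `(K.comap f).subgroupOf (L.comap f)` by definition
        _ ≤ (K.subgroupOf L).comap (f.subgroupComap L) := comap_mono hres

end KSubnormal

theorem stmt2 (F : ∀ (G : Type u) [Group G], Prop) (hF : IsFormation F)
    {G : Type u} [Group G] [Finite G] {N H : Subgroup G} (hN : N.Normal)
    (h : KSubnormal F H ⊤) :
    KSubnormal F ((H ⊔ N).map (QuotientGroup.mk' N)) (⊤ : Subgroup (G ⧸ N)) ∧
    KSubnormal F (H ⊔ N) ⊤ := by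
  have hmap : (H ⊔ N).map (mk' N) = H.map (mk' N) := by
    rw [Subgroup.map_sup, map_mk'_self, sup_bot_eq]
  have hquot : KSubnormal F ((H ⊔ N).map (mk' N)) ⊤ := by
    simpa only [hmap, map_top_of_surjective _ (mk'_surjective N)] using h.map hF (mk' N)
  refine ⟨hquot, ?_⟩
  simpa only [comap_map_mk', sup_eq_right.2 le_sup_right, comap_top]
    using hquot.comap hF (mk'_surjective N)
end

section
/- Let 𝔉 be a subgroup-closed formation, G a finite group, H a K𝔉-subnormal subgroup of G, and L any subgroup of G. Then H ∩ L is K𝔉-subnormal in L. -/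
/-!
Intersecting a chain `H = H₀ ≤ … ≤ Hₙ = G` with `L` gives a chain `H ∩ L = H₀ ∩ L ≤ … ≤ Hₙ ∩ L = L`.
Normality of `Hᵢ` in `Hᵢ₊₁` pulls back along the inclusion `Hᵢ₊₁ ∩ L ↪ Hᵢ₊₁`, and so does the
residual condition, because for a subgroup-closed formation the residual is monotone under
homomorphisms: `f(A^𝔉) ≤ B^𝔉`, as `A / f⁻¹(N)` embeds in `B / N`.
-/

universe u

section

variable {F : ∀ (G : Type u) [Group G], Prop}

theorem fResidual_le_ker (hF : IsFormation F) {A B : Type u} [Group A] [Group B]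
    (f : A →* B) (hf : F f.range) : fResidual F A ≤ f.ker :=
  sInf_le ⟨f.normal_ker, hF.iso _ _ (QuotientGroup.quotientKerEquivRange f).symm hf⟩

theorem fResidual_le_comap_s3 (hF : IsFormation F) (hsc : IsSubgroupClosed F)
    {A B : Type u} [Group A] [Group B] (φ : A →* B) :
    fResidual F A ≤ (fResidual F B).comap φ := by
  intro a ha
  rw [Subgroup.mem_comap, fResidual, Subgroup.mem_sInf]
  rintro N ⟨_, hquot⟩
  have hker : fResidual F A ≤ ((QuotientGroup.mk' N).comp φ).ker :=
    fResidual_le_ker hF _ (hsc _ _ hquot)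
  simpa using hker ha

theorem Subgroup.comap_inclusion_subgroupOf_inf {G : Type u} [Group G] (K M L : Subgroup G) :
    (K.subgroupOf M).comap (Subgroup.inclusion (inf_le_left : M ⊓ L ≤ M)) =
      (K ⊓ L).subgroupOf (M ⊓ L) := by
  ext x
  simp only [Subgroup.mem_comap, Subgroup.mem_subgroupOf, Subgroup.coe_inclusion,
    Subgroup.mem_inf]
  exact ⟨fun hK => ⟨hK, x.2.2⟩, And.left⟩

theorem KSubnormal.inf_right (hF : IsFormation F) (hsc : IsSubgroupClosed F)
    {G : Type u} [Group G] {H K : Subgroup G} (h : KSubnormal F H K) (L : Subgroup G) :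
    KSubnormal F (H ⊓ L) (K ⊓ L) := by
  induction h with
  | refl => exact .refl _
  | @step K M _ hKM hcond ih =>
    refine .step ih (inf_le_inf_right L hKM) ?_
    rw [← Subgroup.comap_inclusion_subgroupOf_inf]
    rcases hcond with hnormal | hresidual
    · exact .inl (hnormal.comap _)
    · exact .inr ((fResidual_le_comap_s3 hF hsc _).trans (Subgroup.comap_mono hresidual))

end

theorem stmt3_general (F : ∀ (G : Type u) [Group G], Prop) (hF : IsFormation F)
    (hsc : IsSubgroupClosed F) {G : Type u} [Group G] {H : Subgroup G}
    (h : KSubnormal F H ⊤) (L : Subgroup G) :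
    KSubnormal F (H ⊓ L) L := by
  simpa using h.inf_right hF hsc L

theorem stmt3 (F : ∀ (G : Type u) [Group G], Prop) (hF : IsFormation F)
    (hsc : IsSubgroupClosed F) {G : Type u} [Group G] [Finite G] {H : Subgroup G}
    (h : KSubnormal F H ⊤) (L : Subgroup G) :
    KSubnormal F (H ⊓ L) L :=
  stmt3_general F hF hsc h L
end

section
/- Let 𝔉 be a subgroup-closed formation and H a proper K𝔉-subnormal subgroup of a finite group G. Then there exists a subgroup M with H ≤ M < G such that H is K𝔉-subnormal in M, and either M is normal in G with G/M simple, or M is a maximal subgroup of G with G/M_G ∈ 𝔉, where M_G is the normal core of M in G. -/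
universe u

section Aux

variable {F : ∀ (G : Type u) [Group G], Prop}

lemma ksub_le {G : Type u} [Group G] {H K : Subgroup G} (h : KSubnormal F H K) : H ≤ K := by
  induction h with
  | refl => exact le_rfl
  | step _ hKL _ ih => exact ih.trans hKL

lemma formation_inf (hF : IsFormation F) {G : Type u} [Group G] {N₁ N₂ : Subgroup G}
    (h₁ : N₁.Normal) (h₂ : N₂.Normal) (f₁ : F (G ⧸ N₁)) (f₂ : F (G ⧸ N₂)) :
    F (G ⧸ (N₁ ⊓ N₂)) := by
  haveI := h₁; haveI := h₂
  haveI hn : (N₁ ⊓ N₂).Normal := Subgroup.normal_inf_normal N₁ N₂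
  set π := QuotientGroup.mk' (N₁ ⊓ N₂) with hπ
  have hsur : Function.Surjective π := QuotientGroup.mk'_surjective _
  haveI hm₁ : (N₁.map π).Normal := h₁.map π hsur
  haveI hm₂ : (N₂.map π).Normal := h₂.map π hsur
  have e₁ := QuotientGroup.quotientQuotientEquivQuotient (N₁ ⊓ N₂) N₁ inf_le_left
  have e₂ := QuotientGroup.quotientQuotientEquivQuotient (N₁ ⊓ N₂) N₂ inf_le_right
  refine hF.subdirect _ (N₁.map π) (N₂.map π) hm₁ hm₂
    (hF.iso _ _ e₁.symm f₁) (hF.iso _ _ e₂.symm f₂) ?_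
  rw [eq_bot_iff]
  rintro x ⟨⟨g₁, hg₁, hx₁⟩, ⟨g₂, hg₂, hx₂⟩⟩
  have hker : g₁⁻¹ * g₂ ∈ N₁ ⊓ N₂ := by
    rw [← QuotientGroup.ker_mk' (N₁ ⊓ N₂)]
    simp only [MonoidHom.mem_ker, map_mul, map_inv]
    rw [hx₁, hx₂]
    group
  have hg₂' : g₂ ∈ N₁ ⊓ N₂ := by
    refine ⟨?_, hg₂⟩
    have : g₂ = g₁ * (g₁⁻¹ * g₂) := by group
    rw [this]; exact N₁.mul_mem hg₁ hker.1
  have : π g₂ = 1 := by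
    rw [← MonoidHom.mem_ker, QuotientGroup.ker_mk']; exact hg₂'
  rw [← hx₂, this]; exact Subgroup.mem_bot.mpr rfl

lemma fResidual_spec (hF : IsFormation F) {G : Type u} [Group G] [Finite G]
    (hne : ∃ N : Subgroup G, ∃ _ : N.Normal, F (G ⧸ N)) :
    ∃ _ : (fResidual F G).Normal, F (G ⧸ fResidual F G) := by
  haveI : Finite (Subgroup G) := Finite.of_injective _ SetLike.coe_injective
  set S := {N : Subgroup G | ∃ _ : N.Normal, F (G ⧸ N)} with hS
  obtain ⟨N₀, hN₀⟩ := hne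
  have hne' : S.Nonempty := ⟨N₀, hN₀⟩
  obtain ⟨M, hM, hmax⟩ := Set.Finite.exists_maximalFor
    (OrderDual.toDual : Subgroup G → (Subgroup G)ᵒᵈ) S (Set.toFinite S) hne'
  have hmin : ∀ N ∈ S, N ≤ M → M = N := by
    intro N hN hle
    exact le_antisymm (hmax hN hle) hle
  have heq : fResidual F G = M := by
    refine le_antisymm (sInf_le hM) (le_sInf ?_)
    intro N hN
    obtain ⟨hMn, hMf⟩ := hM
    obtain ⟨hNn, hNf⟩ := hN
    have hmem : M ⊓ N ∈ S := ⟨Subgroup.normal_inf_normal M N, formation_inf hF hMn hNn hMf hNf⟩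
    have := hmin _ hmem inf_le_left
    rw [this]; exact inf_le_right
  have hmem2 : fResidual F G ∈ S := heq.symm ▸ hM
  exact hmem2

lemma formation_quot_of_le (hF : IsFormation F) {G : Type u} [Group G] {R N : Subgroup G}
    (hR : R.Normal) (hN : N.Normal) (hle : R ≤ N) (hf : F (G ⧸ R)) : F (G ⧸ N) := by
  haveI := hR; haveI := hN
  haveI hm : (N.map (QuotientGroup.mk' R)).Normal := hN.map _ (QuotientGroup.mk'_surjective R)
  have e := QuotientGroup.quotientQuotientEquivQuotient R N hle
  exact hF.iso _ _ e (hF.quot _ _ hm hf)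

lemma fResidual_le_of_quot (hF : IsFormation F) (hsc : IsSubgroupClosed F)
    {G : Type u} [Group G] {R M : Subgroup G}
    (hR : R.Normal) (hf : F (G ⧸ R)) (hle : R ≤ M) :
    fResidual F ↥M ≤ R.subgroupOf M := by
  haveI := hR
  apply sInf_le
  refine ⟨hR.subgroupOf M, ?_⟩
  set φ : ↥M →* G ⧸ R := (QuotientGroup.mk' R).comp M.subtype with hφ
  have hker : R.subgroupOf M = MonoidHom.ker φ := by
    rw [hφ, ← MonoidHom.comap_ker, QuotientGroup.ker_mk', Subgroup.comap_subtype]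
  have e := QuotientGroup.quotientKerEquivRange φ
  have hr : F ↥φ.range := hsc _ _ hf
  have h2 : F (↥M ⧸ MonoidHom.ker φ) := hF.iso _ _ e.symm hr
  haveI : (R.subgroupOf M).Normal := hR.subgroupOf M
  exact hF.iso _ _ (QuotientGroup.quotientMulEquivOfEq hker).symm h2

lemma normal_of_subgroupOf_top {G : Type u} [Group G] {K : Subgroup G}
    (h : (K.subgroupOf (⊤ : Subgroup G)).Normal) : K.Normal := by
  constructor
  intro n hn g
  have := h.conj_mem ⟨n, trivial⟩ (by simpa [Subgroup.mem_subgroupOf] using hn) ⟨g, trivial⟩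
  simpa [Subgroup.mem_subgroupOf] using this

end Aux

theorem stmt4 (F : ∀ (G : Type u) [Group G], Prop) (hF : IsFormation F)
    (hsc : IsSubgroupClosed F) {G : Type u} [Group G] [Finite G] {H : Subgroup G}
    (hH : H ≠ ⊤) (h : KSubnormal F H ⊤) :
    ∃ M : Subgroup G, H ≤ M ∧ M ≠ ⊤ ∧ KSubnormal F H M ∧
      ((∃ _ : M.Normal, IsSimpleGroup (G ⧸ M)) ∨
       (IsCoatom M ∧ F (G ⧸ M.normalCore))) := by
  haveI : Finite (Subgroup G) := Finite.of_injective _ SetLike.coe_injective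
  have key : ∀ (H' T : Subgroup G), KSubnormal F H' T → H' ≠ ⊤ → T = ⊤ →
      ∃ M : Subgroup G, H' ≤ M ∧ M ≠ ⊤ ∧ KSubnormal F H' M ∧
      ((∃ _ : M.Normal, IsSimpleGroup (G ⧸ M)) ∨
       (IsCoatom M ∧ F (G ⧸ M.normalCore))) := by
    intro H' T hT
    induction hT with
    | refl => intro hne htop; exact absurd htop hne
    | step hHK hKL hcond ih =>
      rename_i K L
      intro hne htop
      subst htop
      by_cases hK : K = ⊤
      · exact ih hne hK
      rcases hcond with hnorm | hres
      · -- K is normal in G; choose a maximal proper normal subgroup containing K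
        have hKn : K.Normal := normal_of_subgroupOf_top hnorm
        set S : Set (Subgroup G) := {N | K ≤ N ∧ N ≠ ⊤ ∧ N.Normal} with hS
        obtain ⟨M, hMS, hmax'⟩ := Set.Finite.exists_maximalFor
          (id : Subgroup G → Subgroup G) S (Set.toFinite S) ⟨K, le_rfl, hK, hKn⟩
        obtain ⟨hKM, hMtop, hMn⟩ := hMS
        have hmax : ∀ N ∈ S, M ≤ N → M = N := fun N hN hle => le_antisymm hle (hmax' hN hle)
        refine ⟨M, (ksub_le hHK).trans hKM, hMtop, ?_, Or.inl ⟨hMn, ?_⟩⟩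
        · exact KSubnormal.step hHK hKM (Or.inl (hKn.subgroupOf M))
        haveI := hMn
        have hnt : Nontrivial (G ⧸ M) := by
          obtain ⟨g, hg⟩ : ∃ g : G, g ∉ M := by
            by_contra hcon
            push_neg at hcon
            exact hMtop ((Subgroup.eq_top_iff' M).mpr hcon)
          exact ⟨⟨(g : G ⧸ M), 1, by
            simpa [QuotientGroup.eq_one_iff] using hg⟩⟩
        refine ⟨fun N' hN' => ?_⟩
        set P := N'.comap (QuotientGroup.mk' M) with hP
        have hMP : M ≤ P := by
          intro m hm
          simp only [hP, Subgroup.mem_comap]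
          have : (QuotientGroup.mk' M) m = 1 := by
            simpa [QuotientGroup.eq_one_iff] using hm
          rw [this]; exact N'.one_mem
        by_cases hPtop : P = ⊤
        · right
          rw [eq_top_iff]
          intro x _
          obtain ⟨g, rfl⟩ := QuotientGroup.mk'_surjective M x
          have : g ∈ P := hPtop ▸ Subgroup.mem_top g
          exact this
        · left
          have hPS : P ∈ S := ⟨hKM.trans hMP, hPtop, hN'.comap _⟩
          have hMP' : M = P := hmax P hPS hMP
          rw [eq_bot_iff]
          intro x hx
          obtain ⟨g, rfl⟩ := QuotientGroup.mk'_surjective M x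
          have hgP : g ∈ P := hx
          rw [← hMP'] at hgP
          simpa [QuotientGroup.eq_one_iff] using hgP
      · -- fResidual of G (as ⊤) is contained in K
        -- first, extract a normal subgroup R ≤ K with F (G ⧸ R)
        have hne' : ∃ N : Subgroup (⊤ : Subgroup G), ∃ _ : N.Normal, F (↥(⊤ : Subgroup G) ⧸ N) := by
          by_contra hcon
          push_neg at hcon
          have hempty : {N : Subgroup ↥(⊤ : Subgroup G) | ∃ _ : N.Normal, F (↥(⊤ : Subgroup G) ⧸ N)} = ∅ := by
            ext N; simp only [Set.mem_setOf_eq, Set.mem_empty_iff_false, iff_false]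
            rintro ⟨hn, hf⟩; exact (hcon N hn) hf
          have : fResidual F ↥(⊤ : Subgroup G) = ⊤ := by
            rw [fResidual, hempty, sInf_empty]
          rw [this, top_le_iff] at hres
          apply hK
          rw [eq_top_iff]
          intro g _
          have : (⟨g, trivial⟩ : ↥(⊤ : Subgroup G)) ∈ K.subgroupOf ⊤ := hres ▸ Subgroup.mem_top _
          simpa [Subgroup.mem_subgroupOf] using this
        obtain ⟨hRn', hRf'⟩ := fResidual_spec hF hne'
        set e : ↥(⊤ : Subgroup G) ≃* G := Subgroup.topEquiv with he
        set R : Subgroup G := (fResidual F ↥(⊤ : Subgroup G)).map (e : ↥(⊤ : Subgroup G) →* G)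
          with hR
        have hRn : R.Normal := hRn'.map _ (fun g => ⟨⟨g, trivial⟩, rfl⟩)
        haveI := hRn'
        haveI := hRn
        have hRf : F (G ⧸ R) :=
          hF.iso _ _ (QuotientGroup.congr (fResidual F ↥(⊤ : Subgroup G)) R e rfl) hRf'
        have hRK : R ≤ K := by
          rintro x ⟨y, hy, rfl⟩
          have := hres hy
          simpa [Subgroup.mem_subgroupOf, he] using this
        -- choose a coatom M ≥ K
        obtain ⟨M, hM, hKM⟩ := (eq_top_or_exists_le_coatom K).resolve_left hK
        refine ⟨M, (ksub_le hHK).trans hKM, hM.1, ?_, Or.inr ⟨hM, ?_⟩⟩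
        · refine KSubnormal.step hHK hKM (Or.inr ?_)
          calc fResidual F ↥M ≤ R.subgroupOf M :=
                fResidual_le_of_quot hF hsc hRn hRf (hRK.trans hKM)
            _ ≤ K.subgroupOf M := Subgroup.comap_mono hRK
        · haveI : M.normalCore.Normal := Subgroup.normalCore_normal M
          refine formation_quot_of_le hF hRn this ?_ hRf
          exact Subgroup.normal_le_normalCore.mpr (hRK.trans hKM)
  exact key H ⊤ h hH rfl
end

section
/- If H is submodular in a finite group G and K ≤ G, then H ∩ K is submodular in K. -/
universe u

/-! Modularity of `M` in `L` says that `M` is a modular element of the interval `[⊥, L]` of the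
subgroup lattice of `G`, and this passes to `M ⊓ K` in `[⊥, K]` for every `K ≤ L`. Intersecting a
modular chain from `H` to `⊤` with `K` therefore gives a modular chain from `H ⊓ K` to `K`. -/

/-- `m` is a modular element of the lattice `Set.Iic l`, phrased in the ambient lattice. -/
structure IsModularIn {α : Type*} [Lattice α] (m l : α) : Prop where
  le : m ≤ l
  sup_inf_left : ∀ x ≤ l, ∀ y ≤ l, x ≤ y → (x ⊔ m) ⊓ y = x ⊔ (m ⊓ y)
  sup_inf_right : ∀ x ≤ l, ∀ y ≤ l, m ≤ y → (m ⊔ x) ⊓ y = m ⊔ (x ⊓ y)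

theorem IsModularIn.inf {α : Type*} [Lattice α] {m l k : α} (h : IsModularIn m l) (hk : k ≤ l) :
    IsModularIn (m ⊓ k) k := by
  have join_eq {x : α} (hx : x ≤ k) : x ⊔ m ⊓ k = (x ⊔ m) ⊓ k :=
    (h.sup_inf_left x (hx.trans hk) k hk hx).symm
  refine ⟨inf_le_right, fun x _ y hy hxy => ?_, fun x hx y hy hny => ?_⟩
  · rw [join_eq (hxy.trans hy), inf_assoc, inf_eq_right.mpr hy,
      h.sup_inf_left x (hxy.trans (hy.trans hk)) y (hy.trans hk) hxy, inf_assoc, inf_eq_right.mpr hy]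
  · have hmy : m ⊓ y = m ⊓ k := le_antisymm (inf_le_inf_left m hy) (le_inf inf_le_left hny)
    -- Modularity for `y ≤ x ⊓ (m ⊔ y) ⊔ y`, whose meet with `m` lies below `m ⊓ k ≤ y`.
    have hx'y : x ⊓ (m ⊔ y) ≤ y := by
      have hx'k : x ⊓ (m ⊔ y) ⊔ y ≤ k := sup_le (inf_le_left.trans hx) hy
      have key := h.sup_inf_left y (hy.trans hk) _ (hx'k.trans hk) le_sup_right
      rw [inf_eq_right.mpr (sup_le (inf_le_right.trans (sup_comm m y).le) le_sup_left),
        sup_eq_left.mpr ((le_inf inf_le_left (inf_le_right.trans hx'k)).trans hny)] at key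
      exact le_sup_left.trans key.le
    have hx' : x ⊓ (m ⊔ y) = x ⊓ y :=
      le_antisymm (le_inf inf_le_left hx'y) (inf_le_inf_left x le_sup_right)
    calc (m ⊓ k ⊔ x) ⊓ y = (m ⊔ x) ⊓ y := by
          rw [sup_comm, join_eq hx, sup_comm x, inf_assoc, inf_eq_right.mpr hy]
      _ = (m ⊔ x) ⊓ (m ⊔ y) ⊓ y := by rw [inf_assoc, inf_eq_right.mpr (le_sup_right : y ≤ m ⊔ y)]
      _ = (x ⊓ y ⊔ m) ⊓ y := by
          rw [h.sup_inf_right x (hx.trans hk) (m ⊔ y) (sup_le h.le (hy.trans hk)) le_sup_left, hx',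
            sup_comm]
      _ = m ⊓ k ⊔ x ⊓ y := by
          rw [h.sup_inf_left _ ((inf_le_right.trans hy).trans hk) y (hy.trans hk) inf_le_right, hmy,
            sup_comm]

theorem Subgroup.isModularSubgroup_subgroupOf_iff {G : Type u} [Group G] {M L : Subgroup G}
    (hML : M ≤ L) : IsModularSubgroup (M.subgroupOf L) ↔ IsModularIn M L := by
  have hinj := L.subtype_injective
  have eq_iff {A B : Subgroup L} : A = B ↔ A.map L.subtype = B.map L.subtype :=
    (Subgroup.map_injective hinj).eq_iff.symm
  simp +contextual only [IsModularSubgroup, Subgroup.forall (H := L), eq_iff, Subgroup.map_sup,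
    Subgroup.map_inf _ _ _ hinj, ← Subgroup.map_subtype_le_map_subtype,
    Subgroup.map_subgroupOf_eq_of_le, Subgroup.map_subgroupOf_eq_of_le hML]
  exact ⟨fun h => ⟨hML, h.1, h.2⟩, fun h => ⟨h.2, h.3⟩⟩

theorem Submodular.inf_right {G : Type u} [Group G] {A B : Subgroup G} (h : Submodular A B)
    (K : Subgroup G) : Submodular (A ⊓ K) (B ⊓ K) := by
  induction h with
  | refl => exact .refl _
  | @step L L' _ hLL' hmod ih =>
    refine ih.step (inf_le_inf_right K hLL') ?_
    have hmod' := ((Subgroup.isModularSubgroup_subgroupOf_iff hLL').mp hmod).inf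
      (inf_le_left : L' ⊓ K ≤ L')
    rwa [← inf_assoc, inf_eq_left.mpr hLL', ← Subgroup.isModularSubgroup_subgroupOf_iff
      (inf_le_inf_right K hLL')] at hmod'

theorem stmt6_general {G : Type u} [Group G] {H : Subgroup G}
    (h : Submodular H ⊤) (K : Subgroup G) :
    Submodular (H ⊓ K) K := by
  simpa using h.inf_right K

theorem stmt6 {G : Type u} [Group G] [Finite G] {H : Subgroup G}
    (h : Submodular H ⊤) (K : Subgroup G) :
    Submodular (H ⊓ K) K :=
  stmt6_general h K
end

section
/- Let N be a normal subgroup of a finite group G and H ≤ G. If H is submodular in G, then HN/N is submodular in G/N and HN is submodular in G. Conversely, if N ≤ H and H/N is submodular in G/N, then H is submodular in G. -/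
universe u

/-!
Via `comap`, the subgroup lattice of `G ⧸ N` is the interval above `N` in that of `G`. A normal
subgroup is a modular element of the subgroup lattice (Dedekind's law), and this lets modularity
pass between the whole lattice and the interval: modular subgroups map to modular subgroups under
surjections, and a subgroup containing the kernel is modular when its image is. Applying this at
every step of a chain, submodularity is preserved by images and by preimages under `G → G ⧸ N`,
and `HN` is the preimage of the image of `H`.
-/

open Subgroup
open scoped Pointwise

theorem Subgroup.sup_inf_assoc_of_le_of_coe_sup {G : Type*} [Group G] {A C : Subgroup G}
    (B : Subgroup G) (hAC : A ≤ C) (hAB : ((A ⊔ B : Subgroup G) : Set G) = A * B) :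
    (A ⊔ B) ⊓ C = A ⊔ B ⊓ C := by
  refine le_antisymm (fun g hg => ?_)
    (le_inf (sup_le_sup_left inf_le_left A) (sup_le hAC inf_le_right))
  have hg' : g ∈ (A : Set G) * ↑(B ⊓ C) := by
    rw [mul_inf_assoc A B C hAC, ← hAB]
    exact hg
  obtain ⟨a, ha, b, hb, rfl⟩ := hg'
  exact mul_mem_sup ha hb

section Modular

variable {G G' : Type*} [Group G] [Group G'] {f : G →* G'}

theorem IsModularSubgroup.of_normal (M : Subgroup G) [M.Normal] : IsModularSubgroup M :=
  ⟨fun X _ hXY => sup_inf_assoc_of_le_of_coe_sup M hXY (mul_normal X M),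
    fun X _ hMY => sup_inf_assoc_of_le_of_coe_sup X hMY (normal_mul M X)⟩

theorem IsModularSubgroup.map (hf : Function.Surjective f) {K : Subgroup G}
    (hK : IsModularSubgroup K) : IsModularSubgroup (K.map f) := by
  have hk := IsModularSubgroup.of_normal f.ker
  refine ⟨fun X' Y' hXY => comap_injective hf ?_, fun X' Y' hKY => comap_injective hf ?_⟩
  all_goals
    simp only [comap_inf, ← comap_sup_eq f _ _ hf, comap_map_eq]
    have hkX := ker_le_comap f X'
    have hkY := ker_le_comap f Y'
  · calc (X'.comap f ⊔ (K ⊔ f.ker)) ⊓ Y'.comap f = (X'.comap f ⊔ K) ⊓ Y'.comap f := by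
          rw [← sup_assoc, sup_eq_left.2 (hkX.trans le_sup_left)]
      _ = X'.comap f ⊔ K ⊓ Y'.comap f := hK.1 _ _ (comap_mono hXY)
      _ = X'.comap f ⊔ (f.ker ⊔ K) ⊓ Y'.comap f := by
          rw [hk.2 K _ hkY, ← sup_assoc, sup_eq_left.2 hkX]
      _ = X'.comap f ⊔ (K ⊔ f.ker) ⊓ Y'.comap f := by rw [sup_comm K]
  · calc (K ⊔ f.ker ⊔ X'.comap f) ⊓ Y'.comap f = (K ⊔ X'.comap f) ⊓ Y'.comap f := by
          rw [sup_assoc, sup_eq_right.2 hkX]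
      _ = K ⊔ X'.comap f ⊓ Y'.comap f := hK.2 _ _ ((le_comap_map f K).trans (comap_mono hKY))
      _ = K ⊔ f.ker ⊔ X'.comap f ⊓ Y'.comap f := by
          rw [sup_assoc, sup_eq_right.2 (le_inf hkX hkY)]

theorem IsModularSubgroup.of_map (hf : Function.Surjective f) {K : Subgroup G}
    (hkK : f.ker ≤ K) (hK : IsModularSubgroup (K.map f)) : IsModularSubgroup K := by
  have hk := IsModularSubgroup.of_normal f.ker
  have hKK : (K.map f).comap f = K := comap_map_eq_self hkK
  refine ⟨fun X Y hXY => ?_, fun X Y hKY => ?_⟩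
  · have hXKY : (X ⊔ K) ⊓ (Y ⊔ f.ker) = X ⊔ K ⊓ Y ⊔ f.ker :=
      calc (X ⊔ K) ⊓ (Y ⊔ f.ker) = ((X.map f ⊔ K.map f) ⊓ Y.map f).comap f := by
            rw [comap_inf, ← comap_sup_eq f _ _ hf, hKK, comap_map_eq, comap_map_eq, sup_right_comm X,
              sup_assoc, sup_eq_left.2 hkK]
        _ = (X.map f ⊔ K.map f ⊓ Y.map f).comap f := by rw [hK.1 _ _ (map_mono hXY)]
        _ = X ⊔ f.ker ⊔ K ⊓ (Y ⊔ f.ker) := by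
            rw [← comap_sup_eq f _ _ hf, comap_inf, hKK, comap_map_eq, comap_map_eq]
        _ = X ⊔ K ⊓ Y ⊔ f.ker := by
            rw [inf_comm, sup_comm Y, hk.2 Y K hkK, sup_assoc, sup_left_idem, inf_comm Y,
              sup_comm f.ker, ← sup_assoc]
    calc (X ⊔ K) ⊓ Y = (X ⊔ K) ⊓ (Y ⊔ f.ker) ⊓ Y := by
          rw [inf_assoc, inf_eq_right.2 (le_sup_left : Y ≤ Y ⊔ f.ker)]
      _ = X ⊔ K ⊓ Y ⊔ f.ker ⊓ Y := by
          rw [hXKY, hk.1 (X ⊔ K ⊓ Y) Y (sup_le hXY inf_le_right)]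
      _ = X ⊔ K ⊓ Y := sup_eq_left.2 (le_sup_of_le_right (inf_le_inf_right Y hkK))
  · have hkY : f.ker ≤ Y := hkK.trans hKY
    calc (K ⊔ X) ⊓ Y = ((K.map f ⊔ X.map f) ⊓ Y.map f).comap f := by
          rw [comap_inf, ← comap_sup_eq f _ _ hf, hKK, comap_map_eq, comap_map_eq, sup_eq_left.2 hkY,
            sup_comm X, ← sup_assoc, sup_eq_left.2 hkK]
      _ = (K.map f ⊔ X.map f ⊓ Y.map f).comap f := by rw [hK.2 _ _ (map_mono hKY)]
      _ = K ⊔ (f.ker ⊔ X) ⊓ Y := by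
          rw [← comap_sup_eq f _ _ hf, comap_inf, hKK, comap_map_eq, comap_map_eq, sup_eq_left.2 hkY,
            sup_comm X]
      _ = K ⊔ X ⊓ Y := by rw [hk.2 X Y hkY, ← sup_assoc, sup_eq_left.2 hkK]

theorem IsModularSubgroup.comap (hf : Function.Surjective f) {M : Subgroup G'}
    (hM : IsModularSubgroup M) : IsModularSubgroup (M.comap f) :=
  .of_map hf (ker_le_comap f M) (by rwa [map_comap_eq_self_of_surjective hf])

theorem Subgroup.map_subgroupOf_subgroupMap {K L : Subgroup G} (hKL : K ≤ L) :
    (K.subgroupOf L).map (f.subgroupMap L) = (K.map f).subgroupOf (L.map f) := by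
  ext ⟨y, hy⟩
  simp only [mem_subgroupOf, mem_map]
  constructor
  · rintro ⟨x, hxK, hxy⟩
    exact ⟨x, hxK, congrArg Subtype.val hxy⟩
  · rintro ⟨x, hxK, rfl⟩
    exact ⟨⟨x, hKL hxK⟩, hxK, rfl⟩

theorem Submodular.map (f : G →* G') {H K : Subgroup G} (h : Submodular H K) :
    Submodular (H.map f) (K.map f) := by
  induction h with
  | refl => exact .refl _
  | @step K L _ hKL hmod ih =>
    refine .step ih (map_mono hKL) ?_
    rw [← map_subgroupOf_subgroupMap hKL]
    exact hmod.map (f.subgroupMap_surjective L)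

theorem Submodular.comap (hf : Function.Surjective f) {H K : Subgroup G'} (h : Submodular H K) :
    Submodular (H.comap f) (K.comap f) := by
  induction h with
  | refl => exact .refl _
  | @step K L _ hKL hmod ih =>
    exact .step ih (comap_mono hKL) (hmod.comap (f.subgroupComap_surjective_of_surjective L hf))

end Modular

theorem stmt7_general {G : Type u} [Group G] {N H : Subgroup G} (hN : N.Normal) :
    (Submodular H ⊤ →
      Submodular ((H ⊔ N).map (QuotientGroup.mk' N)) (⊤ : Subgroup (G ⧸ N)) ∧
      Submodular (H ⊔ N) ⊤) ∧
    (N ≤ H → Submodular (H.map (QuotientGroup.mk' N)) (⊤ : Subgroup (G ⧸ N)) →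
      Submodular H ⊤) := by
  have hπ := QuotientGroup.mk'_surjective N
  have of_quotient (K : Subgroup G) (hK : Submodular (K.map (QuotientGroup.mk' N)) ⊤) :
      Submodular (K ⊔ N) ⊤ := by
    simpa [comap_map_eq] using hK.comap hπ
  refine ⟨fun hH => ?_, fun hNH hH => by simpa [sup_eq_left.2 hNH] using of_quotient H hH⟩
  have hHN : Submodular ((H ⊔ N).map (QuotientGroup.mk' N)) ⊤ := by
    simpa [Subgroup.map_sup, map_top_of_surjective _ hπ] using hH.map (QuotientGroup.mk' N)
  exact ⟨hHN, by simpa using of_quotient _ hHN⟩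

theorem stmt7 {G : Type u} [Group G] [Finite G] {N H : Subgroup G} (hN : N.Normal) :
    (Submodular H ⊤ →
      Submodular ((H ⊔ N).map (QuotientGroup.mk' N)) (⊤ : Subgroup (G ⧸ N)) ∧
      Submodular (H ⊔ N) ⊤) ∧
    (N ≤ H → Submodular (H.map (QuotientGroup.mk' N)) (⊤ : Subgroup (G ⧸ N)) →
      Submodular H ⊤) :=
  stmt7_general hN
end

section
/- The maximal subgroup C₆ of the Frobenius group F₇ = C₇ ⋊ C₆ (with C₆ acting faithfully) is not submodular in F₇, although F₇ belongs to 𝔘₁ and hence every subgroup of F₇ is K𝔘₁-subnormal in F₇. -/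
universe u

/-!
`|G| = 42` is square-free, and `1 ◁ N ◁ G` has cyclic factors because `Q` embeds into
`Aut N ≅ (ZMod 7)ˣ`; so `G ∈ 𝔘₁`, its 𝔘₁-residual is trivial, and every subgroup is
K𝔘₁-subnormal in a single step. The complement `Q` has prime index 7, hence is maximal, and a
submodular maximal subgroup is modular. But for a generator `n` of `N` the conjugate `Qⁿ` meets
`Q` trivially by faithfulness, and any `1 < X < Qⁿ` gives
`(X ⊔ Q) ⊓ Qⁿ = Qⁿ ≠ X = X ⊔ (Q ⊓ Qⁿ)`.
-/

open Subgroup Pointwise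

section

variable {G : Type u} [Group G]

theorem Submodular.le {H L : Subgroup G} (h : Submodular H L) : H ≤ L := by
  induction h with
  | refl => exact le_rfl
  | step _ hKL _ ih => exact ih.trans hKL

theorem Submodular.isModularSubgroup_of_covBy {H L : Subgroup G} (h : Submodular H L)
    (hHL : H ⋖ L) : IsModularSubgroup (H.subgroupOf L) := by
  induction h with
  | refl => exact absurd rfl hHL.ne
  | step hHK hKL hmod ih =>
    rcases hHL.eq_or_eq hHK.le hKL with rfl | rfl
    · exact hmod
    · exact ih hHL

theorem IsModularSubgroup.orderIso {H : Type u} [Group H] {M : Subgroup G}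
    (hM : IsModularSubgroup M) (φ : Subgroup G ≃o Subgroup H) : IsModularSubgroup (φ M) := by
  constructor
  · intro X Y hXY
    have := congrArg φ (hM.1 (φ.symm X) (φ.symm Y) (φ.symm.monotone hXY))
    simpa only [OrderIso.map_sup, OrderIso.map_inf, OrderIso.apply_symm_apply] using this
  · intro X Y hMY
    have := congrArg φ (hM.2 (φ.symm X) (φ.symm Y) (by simpa using φ.symm.monotone hMY))
    simpa only [OrderIso.map_sup, OrderIso.map_inf, OrderIso.apply_symm_apply] using this

theorem IsModularSubgroup.of_subgroupOf_top {M : Subgroup G}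
    (hM : IsModularSubgroup (M.subgroupOf ⊤)) : IsModularSubgroup M := by
  convert hM.orderIso (MulEquiv.mapSubgroup topEquiv)
  ext x
  simp [mem_subgroupOf]

theorem not_isModularSubgroup_of_isCoatom {M X Y : Subgroup G} (hM : IsCoatom M)
    (hMY : Disjoint M Y) (hX : X ≠ ⊥) (hXY : X ≤ Y) (hXY' : X ≠ Y) :
    ¬ IsModularSubgroup M := by
  intro hmod
  have hXM : ¬ X ≤ M := fun h => hX (le_bot_iff.mp ((le_inf h hXY).trans hMY.le_bot))
  have := hmod.1 X Y hXY
  rw [hM.2 _ (right_lt_sup.mpr hXM), top_inf_eq, disjoint_iff.mp hMY, sup_bot_eq] at this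
  exact hXY' this.symm

theorem Subgroup.isCoatom_of_index_prime {H : Subgroup G} (hH : H.index.Prime) : IsCoatom H := by
  refine ⟨fun h => hH.ne_one (index_eq_one.mpr h), fun K hHK => ?_⟩
  rcases (Nat.dvd_prime hH).mp (index_dvd_of_le hHK.le) with hK | hK
  · exact index_eq_one.mp hK
  · have := relIndex_mul_index hHK.le
    rw [hK, Nat.mul_eq_right hH.ne_zero, relIndex_eq_one] at this
    exact absurd this hHK.not_ge

theorem IsSupersolvable.of_mulEquiv {H : Type u} [Group H] (e : G ≃* H) (h : IsSupersolvable G) :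
    IsSupersolvable H := by
  obtain ⟨n, s, h0, hl, hnorm, hgen⟩ := h
  refine ⟨n, fun i => (s i).map e.toMonoidHom, by simp only [h0, Subgroup.map_bot],
    by simp only [hl]; exact map_top_of_surjective _ e.surjective,
    fun i => (hnorm i).map _ e.surjective, fun i => ?_⟩
  obtain ⟨g, hg⟩ := hgen i
  exact ⟨e g, by
    simp only [hg, Subgroup.map_sup, MonoidHom.map_zpowers, MulEquiv.coe_toMonoidHom]⟩

theorem isSupersolvable_of_sup_eq_top {N Q : Subgroup G} (hN : N.Normal) [IsCyclic N]
    [IsCyclic Q] (hNQ : N ⊔ Q = ⊤) : IsSupersolvable G := by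
  obtain ⟨n, hn⟩ := N.isCyclic_iff_exists_zpowers_eq_top.mp ‹_›
  obtain ⟨q, hq⟩ := Q.isCyclic_iff_exists_zpowers_eq_top.mp ‹_›
  refine ⟨2, ![⊥, N, ⊤], rfl, rfl, fun i => ?_, fun i => ?_⟩ <;> fin_cases i
  · exact normal_bot
  · exact hN
  · exact normal_top
  · exact ⟨n, by simp [hn]⟩
  · exact ⟨q, by simp [hq, hNQ]⟩

theorem U1.of_mulEquiv {H : Type u} [Group H] (e : G ≃* H) (h : U1 G) : U1 H :=
  ⟨h.1.of_mulEquiv e, Monoid.exponent_eq_of_mulEquiv e ▸ h.2⟩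

theorem U1.of_squarefree_card [Finite G] (hG : IsSupersolvable G)
    (hcard : Squarefree (Nat.card G)) : U1 G :=
  ⟨hG, hcard.squarefree_of_dvd Group.exponent_dvd_nat_card⟩

theorem fResidual_eq_bot {F : ∀ (G : Type u) [Group G], Prop} (h : F (G ⧸ (⊥ : Subgroup G))) :
    fResidual F G = ⊥ :=
  le_bot_iff.mp (sInf_le ⟨normal_bot, h⟩)

theorem kSubnormal_top_of_U1 (hG : U1 G) (H : Subgroup G) : KSubnormal U1 H ⊤ :=
  .step (.refl H) le_top <| .inr <| by
    rw [fResidual_eq_bot (hG.of_mulEquiv (QuotientGroup.quotientBot.trans topEquiv).symm)]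
    exact bot_le

theorem isCyclic_of_faithful_conj {N Q : Subgroup G} [N.Normal] (hN : (Nat.card N).Prime)
    (hfaithful : ∀ q ∈ Q, (∀ n ∈ N, q * n * q⁻¹ = n) → q = 1) : IsCyclic Q := by
  have : Fact (Nat.card N).Prime := ⟨hN⟩
  have : IsCyclic N := isCyclic_of_prime_card rfl
  let φ : Q →* (ZMod (Nat.card N))ˣ :=
    (IsCyclic.mulAutMulEquiv N).toMonoidHom.comp (MulAut.conjNormal.comp Q.subtype)
  refine isCyclic_of_injective φ ((injective_iff_map_eq_one φ).mpr fun q hq => ?_)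
  have : MulAut.conjNormal (q : G) = 1 := (IsCyclic.mulAutMulEquiv N).map_eq_one_iff.mp hq
  exact Subtype.ext <| hfaithful q q.2 fun n hn => by
    simpa using congrArg Subtype.val (DFunLike.congr_fun this ⟨n, hn⟩)

theorem disjoint_conj_smul {N Q : Subgroup G} (hN : N.Normal) (hNQ : Disjoint N Q) {n : G}
    (hn : n ∈ N) (hfix : ∀ q ∈ Q, q * n * q⁻¹ = n → q = 1) :
    Disjoint Q (MulAut.conj n • Q) := by
  refine disjoint_def.mpr fun {x} hxQ hx => ?_
  obtain ⟨q, hq, rfl⟩ := (mem_smul_pointwise_iff_exists x _ Q).mp hx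
  have hcomm : n * q * n⁻¹ * q⁻¹ = 1 := by
    refine disjoint_def.mp hNQ ?_ (Q.mul_mem hxQ (Q.inv_mem hq))
    rw [mul_assoc n, mul_assoc n]
    exact N.mul_mem hn (hN.conj_mem _ (N.inv_mem hn) q)
  have hq1 : q = 1 := hfix q hq <| calc
    q * n * q⁻¹ = (n * q * n⁻¹ * q⁻¹)⁻¹ * n := by group
    _ = n := by rw [hcomm, inv_one, one_mul]
  simp [hq1]

theorem Subgroup.exists_ne_bot_ne_of_prime_dvd_card [Finite G] {Y : Subgroup G} {p : ℕ}
    [Fact p.Prime] (hp : p ∣ Nat.card Y) (hpY : p ≠ Nat.card Y) :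
    ∃ X ≤ Y, X ≠ ⊥ ∧ X ≠ Y := by
  obtain ⟨y, hy⟩ := exists_prime_orderOf_dvd_card' p hp
  have hcard : Nat.card (zpowers (y : G)) = p := by rw [Nat.card_zpowers, orderOf_coe, hy]
  refine ⟨zpowers (y : G), zpowers_le.mpr y.2, fun h => ?_, fun h => hpY (h ▸ hcard).symm⟩
  rw [h, card_bot] at hcard
  exact (Fact.out : p.Prime).ne_one hcard.symm

end

/-- In the Frobenius group `F₇ = C₇ ⋊ C₆` (faithful action), the complement `C₆`
is not submodular, although `F₇ ∈ 𝔘₁` and every subgroup is K𝔘₁-subnormal. -/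
theorem stmt11 {G : Type u} [Group G] [Finite G] {N Q : Subgroup G}
    (hN : N.Normal) (hcardN : Nat.card N = 7) (hcardQ : Nat.card Q = 6)
    (hinf : N ⊓ Q = ⊥) (hsup : N ⊔ Q = ⊤)
    (hfaithful : ∀ q ∈ Q, (∀ n ∈ N, q * n * q⁻¹ = n) → q = 1) :
    U1 G ∧ (∀ H : Subgroup G, KSubnormal U1 H ⊤) ∧ ¬ Submodular Q ⊤ := by
  have hcomp : N.IsComplement' Q := isComplement'_of_disjoint_and_mul_eq_univ
    (disjoint_iff.mpr hinf) (by rw [← normal_mul, hsup, coe_top])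
  have hN7 : (Nat.card N).Prime := by rw [hcardN]; norm_num
  have : Fact (Nat.card N).Prime := ⟨hN7⟩
  have : IsCyclic N := isCyclic_of_prime_card rfl
  have : IsCyclic Q := isCyclic_of_faithful_conj hN7 hfaithful
  have hU1 : U1 G := .of_squarefree_card (isSupersolvable_of_sup_eq_top hN hsup)
    (by rw [← hcomp.card_mul_card, hcardN, hcardQ,
      Nat.squarefree_iff_nodup_primeFactorsList (by norm_num)]; simp [Nat.primeFactorsList_ofNat])
  refine ⟨hU1, kSubnormal_top_of_U1 hU1, fun hQ => ?_⟩
  have hQmax : IsCoatom Q := isCoatom_of_index_prime (hcomp.index_eq_card ▸ hN7)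
  obtain ⟨n, hn⟩ := N.isCyclic_iff_exists_zpowers_eq_top.mp ‹_›
  have hfix : ∀ q ∈ Q, q * n * q⁻¹ = n → q = 1 := fun q hq hqn =>
    hfaithful q hq fun m hm => by
      obtain ⟨k, rfl⟩ := mem_zpowers_iff.mp (hn ▸ hm)
      rw [← conj_zpow, hqn]
  have hcardY : Nat.card (MulAut.conj n • Q : Subgroup G) = 6 :=
    (Nat.card_congr (equivSMul (MulAut.conj n) Q).toEquiv).symm.trans hcardQ
  obtain ⟨X, hXY, hX, hXY'⟩ :=
    exists_ne_bot_ne_of_prime_dvd_card (p := 2) (by rw [hcardY]; norm_num)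
      (by rw [hcardY]; norm_num)
  exact not_isModularSubgroup_of_isCoatom hQmax
    (disjoint_conj_smul hN (disjoint_iff.mpr hinf) (hn ▸ mem_zpowers n) hfix) hX hXY hXY'
    (hQ.isModularSubgroup_of_covBy hQmax.covBy_top).of_subgroupOf_top
end

section
/- Let 𝔉 be a subgroup-closed solvable formation, A a solvable K𝔉-subnormal subgroup of a finite group G, and B any solvable subgroup of G. Then the subgroup ⟨A, B⟩ generated by A and B is solvable. -/
universe u

set_option linter.unusedVariables false

section Aux

variable {GG : Type*} [Group GG]

lemma solvable_congr' {α β : Type*} [Group α] [Group β] (e : α ≃* β) (h : IsSolvable α) :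
    IsSolvable β :=
  @solvable_of_solvable_injective _ _ _ _ e.symm.toMonoidHom e.symm.injective h

lemma solvable_of_le {H K : Subgroup GG} (hle : H ≤ K) (h : IsSolvable K) : IsSolvable H :=
  @solvable_of_solvable_injective _ _ _ _ (Subgroup.inclusion hle)
    (Subgroup.inclusion_injective hle) h

lemma solvable_of_map_inf {H : Type*} [Group H] (φ : GG →* H) (X : Subgroup GG)
    (h1 : IsSolvable (X.map φ)) (h2 : IsSolvable (φ.ker ⊓ X : Subgroup GG)) :
    IsSolvable X := by
  haveI : Group.IsSolvable (X.map φ) := h1; haveI : Group.IsSolvable (φ.ker ⊓ X : Subgroup GG) := h2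
  refine solvable_of_ker_le_range
    (Subgroup.inclusion (inf_le_right : φ.ker ⊓ X ≤ X)) (φ.subgroupMap X) ?_
  intro x hx
  have hk : (↑x : GG) ∈ φ.ker := by
    have h3 : ((φ.subgroupMap X) x : H) = 1 := by
      rw [show (φ.subgroupMap X) x = 1 from hx]; rfl
    simpa [MonoidHom.mem_ker] using h3
  exact ⟨⟨↑x, Subgroup.mem_inf.mpr ⟨hk, x.2⟩⟩, Subtype.ext rfl⟩

lemma sSup_mem_of_sup_closed [Finite GG] {s : Set (Subgroup GG)} (hne : s.Nonempty)
    (hsup : ∀ a ∈ s, ∀ b ∈ s, a ⊔ b ∈ s) : sSup s ∈ s := by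
  obtain ⟨m, hm, hmax⟩ := Set.Finite.exists_maximalFor id s (Set.toFinite s) hne
  simp only [id] at hmax
  have heq : sSup s = m := by
    refine le_antisymm (sSup_le fun a ha => ?_) (le_sSup hm)
    have h2 := hmax (hsup m hm a ha) le_sup_left
    exact le_sup_right.trans h2
  rwa [heq]

lemma sInf_mem_of_inf_closed [Finite GG] {s : Set (Subgroup GG)} (hne : s.Nonempty)
    (hinf : ∀ a ∈ s, ∀ b ∈ s, a ⊓ b ∈ s) : sInf s ∈ s := by
  obtain ⟨m, hm, hmin⟩ := Set.Finite.exists_minimalFor id s (Set.toFinite s) hne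
  simp only [id] at hmin
  have heq : sInf s = m := by
    refine le_antisymm (sInf_le hm) (le_sInf fun a ha => ?_)
    have h2 := hmin (hinf m hm a ha) inf_le_left
    exact h2.trans inf_le_right
  rwa [heq]

/-- The relative solvable radical data. -/
def rset (K : Subgroup GG) : Set (Subgroup GG) :=
  {T | T ≤ K ∧ IsSolvable T ∧ ∀ k ∈ K, ∀ t ∈ T, k * t * k⁻¹ ∈ T}

lemma bot_mem_rset (K : Subgroup GG) : ⊥ ∈ rset K := by
  refine ⟨bot_le, isSolvable_of_comm fun a b => Subtype.ext ?_, ?_⟩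
  · have ha := Subgroup.mem_bot.mp a.2
    have hb := Subgroup.mem_bot.mp b.2
    show (↑a * ↑b : GG) = ↑b * ↑a
    rw [ha, hb]
  · intro k _ t ht
    rw [Subgroup.mem_bot] at ht ⊢
    simp [ht]

lemma subgroupOf_sup' {T₁ T₂ K : Subgroup GG} (h1 : T₁ ≤ K) (h2 : T₂ ≤ K) :
    (T₁ ⊔ T₂).subgroupOf K = T₁.subgroupOf K ⊔ T₂.subgroupOf K := by
  have hmap : Subgroup.map K.subtype (T₁.subgroupOf K ⊔ T₂.subgroupOf K) = T₁ ⊔ T₂ := by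
    rw [Subgroup.map_sup, Subgroup.subgroupOf_map_subtype, Subgroup.subgroupOf_map_subtype,
      inf_of_le_left h1, inf_of_le_left h2]
  rw [Subgroup.subgroupOf, ← hmap, Subgroup.comap_map_eq_self_of_injective K.subtype_injective]

lemma solvable_sup_of_rel [Finite GG] {K T₁ T₂ : Subgroup GG} (h1 : T₁ ≤ K) (h2 : T₂ ≤ K)
    (s1 : IsSolvable T₁) (s2 : IsSolvable T₂)
    (hinv : ∀ k ∈ K, ∀ t ∈ T₁, k * t * k⁻¹ ∈ T₁) : IsSolvable ↥(T₁ ⊔ T₂) := by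
  haveI hN : (T₁.subgroupOf K).Normal := by
    constructor
    intro n hn g
    rw [Subgroup.mem_subgroupOf] at hn ⊢
    simpa using hinv ↑g g.2 ↑n hn
  have hNs : IsSolvable (T₁.subgroupOf K) :=
    solvable_congr' (Subgroup.subgroupOfEquivOfLe h1).symm s1
  haveI hT2s : Group.IsSolvable (T₂.subgroupOf K) :=
    solvable_congr' (Subgroup.subgroupOfEquivOfLe h2).symm s2
  have key : IsSolvable ((T₁ ⊔ T₂).subgroupOf K) := by
    refine solvable_of_map_inf (QuotientGroup.mk' (T₁.subgroupOf K)) _ ?_ ?_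
    · rw [subgroupOf_sup' h1 h2, Subgroup.map_sup]
      have hb : (T₁.subgroupOf K).map (QuotientGroup.mk' (T₁.subgroupOf K)) = ⊥ :=
        (Subgroup.map_eq_bot_iff _).mpr (by rw [QuotientGroup.ker_mk'])
      rw [hb, bot_sup_eq]
      exact solvable_of_surjective
        ((QuotientGroup.mk' (T₁.subgroupOf K)).subgroupMap_surjective (T₂.subgroupOf K))
    · rw [QuotientGroup.ker_mk']
      exact solvable_of_le inf_le_left hNs
  exact solvable_congr' (Subgroup.subgroupOfEquivOfLe (sup_le h1 h2)) key

lemma rad_mem [Finite GG] (K : Subgroup GG) : sSup (rset K) ∈ rset K := by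
  refine sSup_mem_of_sup_closed ⟨⊥, bot_mem_rset K⟩ ?_
  rintro a ⟨ha1, ha2, ha3⟩ b ⟨hb1, hb2, hb3⟩
  refine ⟨sup_le ha1 hb1, solvable_sup_of_rel ha1 hb1 ha2 hb2 ha3, ?_⟩
  intro k hk t ht
  have hmap : Subgroup.map (MulAut.conj k).toMonoidHom (a ⊔ b) ≤ a ⊔ b := by
    rw [Subgroup.map_sup]
    refine sup_le ?_ ?_
    · rintro x ⟨t', ht', rfl⟩
      exact Subgroup.mem_sup_left (by simpa using ha3 k hk t' ht')
    · rintro x ⟨t', ht', rfl⟩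
      exact Subgroup.mem_sup_right (by simpa using hb3 k hk t' ht')
  exact hmap (Subgroup.mem_map.mpr ⟨t, ht, by simp⟩)

lemma rad_conj [Finite GG] {K : Subgroup GG} {l : GG} (hl : ∀ k ∈ K, l * k * l⁻¹ ∈ K)
    (hl' : ∀ k ∈ K, l⁻¹ * k * l ∈ K) :
    ∀ t ∈ sSup (rset K), l * t * l⁻¹ ∈ sSup (rset K) := by
  obtain ⟨hle, hsolv, hinv⟩ := rad_mem K
  have hmem : Subgroup.map (MulAut.conj l).toMonoidHom (sSup (rset K)) ∈ rset K := by
    refine ⟨?_, ?_, ?_⟩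
    · rintro x ⟨t, ht, rfl⟩
      simpa using hl _ (hle ht)
    · exact solvable_congr'
        (Subgroup.equivMapOfInjective (sSup (rset K)) _ (MulAut.conj l).injective) hsolv
    · rintro k hk x ⟨t, ht, rfl⟩
      refine Subgroup.mem_map.mpr
        ⟨(l⁻¹ * k * l) * t * (l⁻¹ * k * l)⁻¹, hinv _ (hl' k hk) t ht, ?_⟩
      simp only [MulEquiv.coe_toMonoidHom, MulAut.conj_apply]
      group
  intro t ht
  exact le_sSup hmem (Subgroup.mem_map.mpr ⟨t, ht, by simp⟩)

lemma quot_inf_solvable (N₁ N₂ : Subgroup GG) [N₁.Normal] [N₂.Normal]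
    (hs1 : IsSolvable (GG ⧸ N₁)) (hs2 : IsSolvable (GG ⧸ N₂)) :
    IsSolvable (GG ⧸ (N₁ ⊓ N₂)) := by
  haveI : Group.IsSolvable (GG ⧸ N₁) := hs1; haveI : Group.IsSolvable (GG ⧸ N₂) := hs2
  set f := (QuotientGroup.mk' N₁).prod (QuotientGroup.mk' N₂) with hf
  have hker : f.ker = N₁ ⊓ N₂ := by
    rw [hf, MonoidHom.ker_prod, QuotientGroup.ker_mk', QuotientGroup.ker_mk']
  have hinj : Function.Injective (QuotientGroup.lift (N₁ ⊓ N₂) f hker.ge) := by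
    rw [injective_iff_map_eq_one]
    intro q hq
    induction q using QuotientGroup.induction_on with
    | _ z =>
      have hz : f z = 1 := hq
      have hzz : z ∈ N₁ ⊓ N₂ := hker ▸ ((MonoidHom.mem_ker (f := f)).mpr hz)
      exact (QuotientGroup.eq_one_iff z).mpr hzz
  exact solvable_of_solvable_injective hinj

end Aux

lemma main_chain (F : ∀ (G : Type u) [Group G], Prop)
    (hsolv : ∀ (G : Type u) [Group G], F G → IsSolvable G)
    {G : Type u} [Group G] [Finite G] {A K : Subgroup G} (hA : IsSolvable A)
    (h : KSubnormal F A K) :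
    ∃ R : Subgroup G, A ≤ R ∧ R ≤ K ∧ IsSolvable R ∧ ∀ k ∈ K, ∀ r ∈ R, k * r * k⁻¹ ∈ R := by
  induction h with
  | refl =>
    exact ⟨A, le_refl A, le_refl A, hA,
      fun k hk r hr => mul_mem (mul_mem hk hr) (inv_mem hk)⟩
  | @step K L h1 h2 h3 ih =>
    obtain ⟨R, hAR, hRK, hRs, hRinv⟩ := ih
    rcases h3 with hnorm | hres
    · -- K is normal in L : take the relative solvable radical of K
      have hm := rad_mem (GG := G) K
      refine ⟨sSup (rset K), hAR.trans (le_sSup ⟨hRK, hRs, hRinv⟩), hm.1.trans h2, hm.2.1, ?_⟩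
      intro l hl r hr
      have c1 : ∀ k ∈ K, l * k * l⁻¹ ∈ K := by
        intro k hk
        have hc := hnorm.conj_mem ⟨k, h2 hk⟩ (Subgroup.mem_subgroupOf.mpr hk) ⟨l, hl⟩
        simpa [Subgroup.mem_subgroupOf] using hc
      have c2 : ∀ k ∈ K, l⁻¹ * k * l ∈ K := by
        intro k hk
        have hc := hnorm.conj_mem ⟨k, h2 hk⟩ (Subgroup.mem_subgroupOf.mpr hk) ⟨l, hl⟩⁻¹
        simpa [Subgroup.mem_subgroupOf] using hc
      exact rad_conj c1 c2 r hr
    · -- residual step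
      have hD := sInf_mem_of_inf_closed (s := {N : Subgroup ↥L | ∃ _ : N.Normal, IsSolvable (↥L ⧸ N)})
        ⟨⊤, inferInstance, by
          haveI := QuotientGroup.subsingleton_quotient_top (G := ↥L)
          exact isSolvable_of_comm fun a b => Subsingleton.elim _ _⟩
        (by
          rintro a ⟨ha, hsa⟩ b ⟨hb, hsb⟩
          haveI := ha; haveI := hb
          exact ⟨inferInstance, quot_inf_solvable a b hsa hsb⟩)
      set D := sInf {N : Subgroup ↥L | ∃ _ : N.Normal, IsSolvable (↥L ⧸ N)} with hDdef
      obtain ⟨hDn, hDq⟩ := hD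
      haveI := hDn
      have hDK : D ≤ K.subgroupOf L := by
        refine le_trans (sInf_le_sInf ?_) hres
        rintro N ⟨hn, hfn⟩
        exact ⟨hn, hsolv _ hfn⟩
      have hRL : R ≤ L := hRK.trans h2
      have hR's : IsSolvable (R.subgroupOf L) :=
        solvable_congr' (Subgroup.subgroupOfEquivOfLe hRL).symm hRs
      have hA'R' : A.subgroupOf L ≤ R.subgroupOf L := Subgroup.comap_mono hAR
      have hR'inv : ∀ k ∈ K.subgroupOf L, ∀ r ∈ R.subgroupOf L, k * r * k⁻¹ ∈ R.subgroupOf L := by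
        intro k hk r hr
        rw [Subgroup.mem_subgroupOf] at hk hr ⊢
        simpa using hRinv ↑k hk ↑r hr
      set S := sSup (rset (⊤ : Subgroup ↥L)) with hSdef
      have hSmem := rad_mem (⊤ : Subgroup ↥L)
      have hSsolv : IsSolvable S := hSmem.2.1
      haveI hSn : S.Normal := ⟨fun n hn g => hSmem.2.2 g (Subgroup.mem_top g) n hn⟩
      -- (a) R' ⊓ D ≤ S
      have hRDS : R.subgroupOf L ⊓ D ≤ S := by
        have hmemD : R.subgroupOf L ⊓ D ∈ rset D := by
          refine ⟨inf_le_right, solvable_of_le inf_le_left hR's, ?_⟩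
          intro d hd t ht
          rw [Subgroup.mem_inf] at ht ⊢
          exact ⟨hR'inv d (hDK hd) t ht.1, hDn.conj_mem t ht.2 d⟩
        have hradD : sSup (rset D) ≤ S := by
          have hmm := rad_mem D
          refine le_sSup ⟨le_top, hmm.2.1, ?_⟩
          intro g _ t ht
          exact rad_conj (fun k hk => hDn.conj_mem k hk g)
            (fun k hk => by simpa using hDn.conj_mem k hk g⁻¹) t ht
        exact (le_sSup hmemD).trans hradD
      -- the quotient by S
      set π := QuotientGroup.mk' S with hπ
      set Dq := D.map π with hDqdef
      haveI hDqn : Dq.Normal := hDn.map π (QuotientGroup.mk'_surjective S)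
      set C := Subgroup.centralizer (Dq : Set (↥L ⧸ S)) with hC
      have hCn : C.Normal := by
        constructor
        intro c hc g
        rw [hC, Subgroup.mem_centralizer_iff] at hc ⊢
        intro x hx
        have hx' : g⁻¹ * x * g ∈ Dq := by simpa using hDqn.conj_mem x hx g⁻¹
        have hcx := hc _ hx'
        calc x * (g * c * g⁻¹) = g * ((g⁻¹ * x * g) * c) * g⁻¹ := by group
          _ = g * (c * (g⁻¹ * x * g)) * g⁻¹ := by rw [hcx]
          _ = (g * c * g⁻¹) * x := by group
      set M := C.comap π with hMdef
      haveI hMn : M.Normal := hCn.comap π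
      have hRM : R.subgroupOf L ≤ M := by
        intro r hr
        have hmem : π r ∈ C := by
          rw [hC, Subgroup.mem_centralizer_iff]
          rintro x ⟨d, hd, rfl⟩
          rw [← map_mul, ← map_mul, QuotientGroup.mk'_eq_mk']
          have hdK : d ∈ K.subgroupOf L := hDK hd
          have h3 : d⁻¹ * r * d ∈ R.subgroupOf L := by
            simpa using hR'inv d⁻¹ (inv_mem hdK) r hr
          have h4 : r⁻¹ * (d⁻¹ * r * d) ∈ R.subgroupOf L := mul_mem (inv_mem hr) h3
          have h5 : r⁻¹ * d⁻¹ * r ∈ D := by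
            simpa using hDn.conj_mem d⁻¹ (inv_mem hd) r⁻¹
          have h6 : (r⁻¹ * d⁻¹ * r) * d ∈ D := mul_mem h5 hd
          refine ⟨r⁻¹ * (d⁻¹ * r * d), hRDS (Subgroup.mem_inf.mpr ⟨h4, by
            have : r⁻¹ * (d⁻¹ * r * d) = (r⁻¹ * d⁻¹ * r) * d := by group
            rw [this]; exact h6⟩), by group⟩
        exact Subgroup.mem_comap.mpr hmem
      -- D ⊓ M is solvable
      have hDMs : IsSolvable ↥(D ⊓ M) := by
        refine solvable_of_map_inf π (D ⊓ M) ?_ ?_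
        · refine isSolvable_of_comm ?_
          rintro ⟨x, hx⟩ ⟨y, hy⟩
          refine Subtype.ext ?_
          obtain ⟨a, ha, hax⟩ := Subgroup.mem_map.mp hx
          obtain ⟨b, hb, hby⟩ := Subgroup.mem_map.mp hy
          rw [Subgroup.mem_inf] at ha hb
          have haM : π a ∈ C := Subgroup.mem_comap.mp ha.2
          rw [hC, Subgroup.mem_centralizer_iff] at haM
          have hcomm := haM (π b) (Subgroup.mem_map.mpr ⟨b, hb.1, rfl⟩)
          show (x * y : ↥L ⧸ S) = y * x
          rw [← hax, ← hby]
          exact hcomm.symm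
        · rw [hπ, QuotientGroup.ker_mk']
          exact solvable_of_le inf_le_left hSsolv
      -- M is solvable
      have hMs : IsSolvable M := by
        haveI : Group.IsSolvable (↥L ⧸ D) := hDq
        refine solvable_of_map_inf (QuotientGroup.mk' D) M ?_ ?_
        · exact (inferInstance : Group.IsSolvable ↥(Subgroup.map (QuotientGroup.mk' D) M))
        · rw [QuotientGroup.ker_mk']
          exact hDMs
      have hMS : M ≤ S :=
        le_sSup ⟨le_top, hMs, fun g _ m hm => hMn.conj_mem m hm g⟩
      have hAS : A.subgroupOf L ≤ S := hA'R'.trans (hRM.trans hMS)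
      refine ⟨S.map L.subtype, ?_, ?_, ?_, ?_⟩
      · intro a ha
        have haL : a ∈ L := h2 (hRK (hAR ha))
        exact Subgroup.mem_map.mpr ⟨⟨a, haL⟩, hAS (Subgroup.mem_subgroupOf.mpr ha), rfl⟩
      · intro x hx
        obtain ⟨s, _, rfl⟩ := Subgroup.mem_map.mp hx
        exact s.2
      · exact solvable_congr' (Subgroup.equivMapOfInjective S L.subtype L.subtype_injective) hSsolv
      · intro l hl x hx
        obtain ⟨s, hs, rfl⟩ := Subgroup.mem_map.mp hx
        refine Subgroup.mem_map.mpr ⟨⟨l, hl⟩ * s * ⟨l, hl⟩⁻¹, hSn.conj_mem s hs _, ?_⟩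
        simp

theorem stmt14 (F : ∀ (G : Type u) [Group G], Prop) (hF : IsFormation F)
    (hsc : IsSubgroupClosed F) (hsolv : ∀ (G : Type u) [Group G], F G → IsSolvable G)
    {G : Type u} [Group G] [Finite G] {A : Subgroup G} (hA : IsSolvable A)
    (h : KSubnormal F A ⊤) (B : Subgroup G) (hB : IsSolvable B) :
    IsSolvable ↥(A ⊔ B) := by
  obtain ⟨R, hAR, -, hRs, hRinv⟩ := main_chain F hsolv hA h
  haveI hRn : R.Normal := ⟨fun n hn g => hRinv g (Subgroup.mem_top g) n hn⟩
  haveI : Group.IsSolvable B := hB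
  refine solvable_of_map_inf (QuotientGroup.mk' R) (A ⊔ B) ?_ ?_
  · rw [Subgroup.map_sup]
    have hbot : A.map (QuotientGroup.mk' R) = ⊥ :=
      (Subgroup.map_eq_bot_iff _).mpr (by rw [QuotientGroup.ker_mk']; exact hAR)
    rw [hbot, bot_sup_eq]
    exact solvable_of_surjective ((QuotientGroup.mk' R).subgroupMap_surjective B)
  · rw [QuotientGroup.ker_mk']
    exact solvable_of_le inf_le_left hRs
end

section
/- Let G be a finite supersolvable primitive group (i.e., G has a maximal subgroup M with trivial core) of square-free exponent. Then G = F(G) ⋊ M, the Fitting subgroup F(G) has prime order r where r is the largest prime divisor of |G|, and F(G) is a Sylow r-subgroup of G. -/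
universe u

open scoped Pointwise
open scoped commutatorElement

/-- A subgroup of a subgroup of prime cardinality is ⊥ or everything. -/
lemma sub_of_prime_card {G : Type u} [Group G] [Finite G] {N K : Subgroup G} {p : ℕ}
    (hp : p.Prime) (hN : Nat.card N = p) (h : K ≤ N) : K = ⊥ ∨ K = N := by
  have hdvd : Nat.card K ∣ p := hN ▸ Subgroup.card_dvd_of_le h
  rcases (Nat.Prime.eq_one_or_self_of_dvd hp _ hdvd) with h1 | h1
  · exact Or.inl (Subgroup.eq_bot_of_card_eq _ h1)
  · exact Or.inr (Subgroup.eq_of_le_of_card_ge h (by rw [hN, h1]))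

/-- A normal subgroup of prime order in a finite nilpotent group is central. -/
lemma prime_normal_le_center {K : Type u} [Group K] [Finite K] [Group.IsNilpotent K]
    (N : Subgroup K) [hNn : N.Normal] {p : ℕ} (hp : p.Prime) (hcard : Nat.card N = p) :
    N ≤ Subgroup.center K := by
  have hle : ⁅N, (⊤ : Subgroup K)⁆ ≤ N := Subgroup.commutator_le_left N ⊤
  rcases sub_of_prime_card hp hcard hle with hbot | heq
  · intro n hn
    rw [Subgroup.mem_center_iff]
    intro g
    have h1 : ⁅n, g⁆ ∈ (⊥ : Subgroup K) :=
      hbot ▸ (Subgroup.commutator_le.mp le_rfl) n hn g (Subgroup.mem_top g)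
    have := commutatorElement_eq_one_iff_mul_comm.mp (Subgroup.mem_bot.mp h1)
    exact this.symm
  · exfalso
    have key : ∀ i, N ≤ Subgroup.lowerCentralSeries (⊤ : Subgroup K) i := by
      intro i
      induction i with
      | zero => exact le_top
      | succ i ih =>
        rw [lowerCentralSeries_succ]
        calc N = ⁅N, (⊤ : Subgroup K)⁆ := heq.symm
          _ ≤ _ := Subgroup.commutator_mono ih le_rfl
    obtain ⟨n, hn⟩ := nilpotent_iff_lowerCentralSeries.mp ‹Group.IsNilpotent K›
    have : N = ⊥ := le_bot_iff.mp (hn ▸ key n)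
    rw [this] at hcard
    simp only [Subgroup.card_eq_one.mpr rfl] at hcard
    exact hp.one_lt.ne hcard

/-- The centralizer of a normal subgroup is normal. -/
lemma centralizer_normal {G : Type u} [Group G] {N : Subgroup G} (hN : N.Normal) :
    (Subgroup.centralizer (N : Set G)).Normal := by
  constructor
  intro c hc g
  rw [Subgroup.mem_centralizer_iff] at hc ⊢
  intro n hn
  have h1 : g⁻¹ * n * g ∈ N := by simpa using hN.conj_mem n hn g⁻¹
  have h2 := hc _ h1
  -- (g⁻¹ n g) c = c (g⁻¹ n g)  ⇒  n (g c g⁻¹) = (g c g⁻¹) n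
  calc n * (g * c * g⁻¹) = g * ((g⁻¹ * n * g) * c) * g⁻¹ := by group
    _ = g * (c * (g⁻¹ * n * g)) * g⁻¹ := by rw [h2]
    _ = g * c * g⁻¹ * n := by group

/-- A nontrivial supersolvable group has a nontrivial cyclic normal subgroup. -/
lemma exists_zpowers_normal {G : Type u} [Group G] [Nontrivial G]
    (hss : IsSupersolvable G) : ∃ g : G, g ≠ 1 ∧ (Subgroup.zpowers g).Normal := by
  obtain ⟨n, s, h0, hlast, hnorm, hstep⟩ := hss
  suffices H : ∀ m (hm : m < n + 1), s ⟨m, hm⟩ ≠ ⊥ →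
      ∃ g : G, g ≠ 1 ∧ (Subgroup.zpowers g).Normal by
    refine H n n.lt_succ_self ?_
    have : (⟨n, n.lt_succ_self⟩ : Fin (n + 1)) = Fin.last n := rfl
    rw [this, hlast]
    intro h
    have hbt : (⊥ : Subgroup G) ≠ ⊤ := bot_ne_top
    exact hbt h.symm
  intro m
  induction m with
  | zero =>
    intro hm h
    exact absurd (show s ⟨0, hm⟩ = ⊥ from h0) h
  | succ m ih =>
    intro hm hne
    have hm' : m < n + 1 := Nat.lt_of_succ_lt hm
    have hmn : m < n := Nat.succ_lt_succ_iff.mp hm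
    by_cases hb : s ⟨m, hm'⟩ = ⊥
    · obtain ⟨g, hg⟩ := hstep ⟨m, hmn⟩
      have e1 : (⟨m, hmn⟩ : Fin n).castSucc = ⟨m, hm'⟩ := rfl
      have e2 : (⟨m, hmn⟩ : Fin n).succ = ⟨m + 1, hm⟩ := rfl
      rw [e1, e2, hb, bot_sup_eq] at hg
      refine ⟨g, ?_, hg ▸ hnorm ⟨m + 1, hm⟩⟩
      intro h1
      rw [h1, Subgroup.zpowers_one_eq_bot] at hg
      exact hne hg
    · exact ih hm' hb

/-- Power down to a prime-order normal cyclic subgroup. -/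
lemma exists_prime_zpowers_normal {G : Type u} [Group G] [Finite G] [Nontrivial G]
    (hss : IsSupersolvable G) :
    ∃ (h : G) (p : ℕ), p.Prime ∧ orderOf h = p ∧ (Subgroup.zpowers h).Normal := by
  obtain ⟨g, hg1, hgN⟩ := exists_zpowers_normal hss
  set n₀ := orderOf g with hn₀
  have hn1 : n₀ ≠ 1 := fun h => hg1 (orderOf_eq_one_iff.mp h)
  have hn0 : n₀ ≠ 0 := (orderOf_pos g).ne'
  set p := n₀.minFac with hpdef
  have hp : p.Prime := Nat.minFac_prime hn1
  have hpd : p ∣ n₀ := Nat.minFac_dvd n₀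
  set h := g ^ (n₀ / p) with hh
  have hord : orderOf h = p := by
    rw [hh, orderOf_pow, ← hn₀, Nat.gcd_eq_right (Nat.div_dvd_of_dvd hpd),
      Nat.div_div_self hpd hn0]
  refine ⟨h, p, hp, hord, ?_⟩
  constructor
  intro x hx g'
  obtain ⟨k, rfl⟩ := Subgroup.mem_zpowers_iff.mp hx
  obtain ⟨j, hj⟩ := Subgroup.mem_zpowers_iff.mp (hgN.conj_mem g (Subgroup.mem_zpowers g) g')
  have key : g' * h * g'⁻¹ = h ^ j := by
    calc g' * g ^ (n₀ / p) * g'⁻¹ = (g' * g * g'⁻¹) ^ (n₀ / p) := by rw [conj_pow]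
      _ = (g ^ j) ^ (n₀ / p) := by rw [hj]
      _ = (g ^ j) ^ ((n₀ / p : ℕ) : ℤ) := by rw [zpow_natCast]
      _ = g ^ (j * (n₀ / p : ℕ)) := by rw [← zpow_mul]
      _ = g ^ (((n₀ / p : ℕ) : ℤ) * j) := by rw [mul_comm]
      _ = (g ^ ((n₀ / p : ℕ) : ℤ)) ^ j := by rw [zpow_mul]
      _ = (g ^ (n₀ / p)) ^ j := by rw [zpow_natCast]
  have : g' * h ^ k * g'⁻¹ = h ^ (j * k) := by
    calc g' * h ^ k * g'⁻¹ = (g' * h * g'⁻¹) ^ k := by rw [conj_zpow]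
      _ = (h ^ j) ^ k := by rw [key]
      _ = h ^ (j * k) := by rw [← zpow_mul]
  rw [this]
  exact Subgroup.zpow_mem _ (Subgroup.mem_zpowers h) _

/-- A supersolvable primitive group of square-free exponent. -/
theorem stmt18 {G : Type u} [Group G] [Finite G] (hss : IsSupersolvable G)
    (hexp : Squarefree (Monoid.exponent G)) {M : Subgroup G}
    (hmax : IsCoatom M) (hcore : M.normalCore = ⊥) :
    fitting G ⊓ M = ⊥ ∧ fitting G ⊔ M = ⊤ ∧
    ∃ r : ℕ, r.Prime ∧ Nat.card (fitting G) = r ∧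
      (r ∣ Nat.card G ∧ ∀ p : ℕ, p.Prime → p ∣ Nat.card G → p ≤ r) ∧
      ∃ P : Sylow r G, (P : Subgroup G) = fitting G := by
  -- G is nontrivial
  have hnt : Nontrivial G := by
    by_contra hn
    rw [not_nontrivial_iff_subsingleton] at hn
    have : M = ⊤ := by
      ext x
      simp [Subsingleton.elim x 1, M.one_mem]
    exact hmax.1 this
  -- a normal subgroup of prime order
  obtain ⟨h, p, hp, hord, hNnorm⟩ := exists_prime_zpowers_normal hss
  set N := Subgroup.zpowers h with hNdef
  have hcardN : Nat.card N = p := by rw [hNdef, Nat.card_zpowers, hord]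
  have hNbot : N ≠ ⊥ := by
    intro hb
    rw [hb, Subgroup.card_eq_one.mpr rfl] at hcardN
    exact hp.one_lt.ne hcardN
  -- N is not contained in M, so N ⊔ M = ⊤
  have hNM : ¬N ≤ M := by
    intro hle
    exact hNbot (le_bot_iff.mp (hcore ▸ Subgroup.normal_le_normalCore.mpr hle))
  have hsup : N ⊔ M = ⊤ := by
    refine hmax.2 (N ⊔ M) (lt_of_le_of_ne le_sup_right ?_)
    intro he
    exact hNM (he ▸ le_sup_left)
  -- the centralizer C of N
  set C := Subgroup.centralizer (N : Set G) with hCdef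
  have hCnorm : C.Normal := centralizer_normal hNnorm
  -- C ⊓ M is normal in G
  have hCMnorm : (C ⊓ M).Normal := by
    rw [← Subgroup.normalizer_eq_top_iff, eq_top_iff, ← hsup]
    refine sup_le ?_ ?_
    · intro x hx
      rw [Subgroup.mem_normalizer_iff]
      intro t
      constructor
      · rintro ⟨htC, htM⟩
        have hc : x * t = t * x := (Subgroup.mem_centralizer_iff.mp htC x hx)
        have : x * t * x⁻¹ = t := by rw [hc]; group
        rw [this]
        exact ⟨htC, htM⟩
      · rintro ⟨htC, htM⟩
        have hc : x * (x * t * x⁻¹) = (x * t * x⁻¹) * x :=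
          Subgroup.mem_centralizer_iff.mp htC x hx
        have ht : x * t * x⁻¹ = t := by
          have h2 : x * (x * t) = x * (t * x) := by
            calc x * (x * t) = (x * (x * t * x⁻¹)) * x := by group
              _ = ((x * t * x⁻¹) * x) * x := by rw [hc]
              _ = x * (t * x) := by group
          have h3 : x * t = t * x := mul_left_cancel h2
          rw [h3]; group
        rw [← ht]
        exact ⟨htC, htM⟩
    · intro m hm
      rw [Subgroup.mem_normalizer_iff]
      intro t
      constructor
      · rintro ⟨htC, htM⟩
        exact ⟨hCnorm.conj_mem t htC m, M.mul_mem (M.mul_mem hm htM) (M.inv_mem hm)⟩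
      · rintro ⟨htC, htM⟩
        have h1 : m⁻¹ * (m * t * m⁻¹) * m⁻¹⁻¹ ∈ C := hCnorm.conj_mem _ htC m⁻¹
        have h2 : m⁻¹ * (m * t * m⁻¹) * m⁻¹⁻¹ = t := by group
        rw [h2] at h1
        have h3 : m⁻¹ * (m * t * m⁻¹) * m ∈ M :=
          M.mul_mem (M.mul_mem (M.inv_mem hm) htM) hm
        have h4 : m⁻¹ * (m * t * m⁻¹) * m = t := by group
        rw [h4] at h3
        exact ⟨h1, h3⟩
  have hCM : C ⊓ M = ⊥ := by
    have := hCMnorm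
    exact le_bot_iff.mp (hcore ▸ Subgroup.normal_le_normalCore.mpr inf_le_right)
  -- N ≤ C
  have hNC : N ≤ C := Subgroup.le_centralizer N
  have hNM2 : N ⊓ M = ⊥ :=
    le_bot_iff.mp (hCM ▸ inf_le_inf_right M hNC)
  -- fitting G ≤ C
  have hfitC : fitting G ≤ C := by
    refine sSup_le ?_
    rintro K ⟨hKnorm, hKnil⟩
    have hKN : K ⊓ N ≤ N := inf_le_right
    rcases sub_of_prime_card hp hcardN hKN with hb | he
    · -- commutator trivial
      have hcomm : ⁅K, N⁆ ≤ ⊥ := by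
        rw [← hb]
        exact le_inf (Subgroup.commutator_le_left K N) (Subgroup.commutator_le_right K N)
      intro k hk
      rw [Subgroup.mem_centralizer_iff]
      intro n hn
      have h1 : ⁅k, n⁆ ∈ (⊥ : Subgroup G) :=
        (Subgroup.commutator_le.mp hcomm) k hk n hn
      exact (commutatorElement_eq_one_iff_mul_comm.mp (Subgroup.mem_bot.mp h1)).symm
    · have hle : N ≤ K := by rw [← he]; exact inf_le_left
      haveI : Group.IsNilpotent ↥K := hKnil
      haveI : (N.subgroupOf K).Normal := hNnorm.subgroupOf K
      have hcard' : Nat.card (N.subgroupOf K) = p := by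
        rw [← hcardN]
        exact Nat.card_congr (Subgroup.subgroupOfEquivOfLe hle).toEquiv
      have hcent := prime_normal_le_center (N.subgroupOf K) hp hcard'
      intro k hk
      rw [Subgroup.mem_centralizer_iff]
      intro n hn
      have hnK : (⟨n, hle hn⟩ : ↥K) ∈ N.subgroupOf K := by
        simpa [Subgroup.mem_subgroupOf] using hn
      have := (Subgroup.mem_center_iff.mp (hcent hnK)) ⟨k, hk⟩
      simpa using congrArg Subtype.val this.symm
  -- Goal 1
  have goal1 : fitting G ⊓ M = ⊥ :=
    le_bot_iff.mp (hCM ▸ inf_le_inf_right M hfitC)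
  -- N ≤ fitting G
  have hNfit : N ≤ fitting G := by
    refine le_sSup ?_
    refine ⟨hNnorm, ?_⟩
    apply nilpotent_iff_lowerCentralSeries.mpr
    refine ⟨1, ?_⟩
    rw [eq_bot_iff, lowerCentralSeries_succ]
    refine Subgroup.commutator_le.mpr ?_
    intro a _ b _
    rw [Subgroup.mem_bot, commutatorElement_eq_one_iff_mul_comm]
    obtain ⟨i, hi⟩ := a.2
    obtain ⟨j, hj⟩ := b.2
    refine Subtype.ext ?_
    show (a : G) * b = (b : G) * a
    rw [← hi, ← hj, zpow_mul_comm]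
  -- Goal 2
  have goal2 : fitting G ⊔ M = ⊤ := by
    rw [eq_top_iff, ← hsup]
    exact sup_le_sup_right hNfit M
  -- fitting G = N
  have hfitN : fitting G = N := by
    refine le_antisymm ?_ hNfit
    intro x hx
    have hx3 : x ∈ (N : Set G) * (M : Set G) := by
      rw [← Subgroup.normal_mul, hsup]
      simp
    obtain ⟨a, ha, b, hb, rfl⟩ := hx3
    have hbfit : b ∈ fitting G := by
      have : a⁻¹ * (a * b) ∈ fitting G :=
        (fitting G).mul_mem ((fitting G).inv_mem (hNfit ha)) hx
      simpa using this
    have : b ∈ fitting G ⊓ M := ⟨hbfit, hb⟩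
    rw [goal1, Subgroup.mem_bot] at this
    show a * b ∈ N
    rw [this, mul_one]
    exact ha
  -- complement cardinality
  have hdisj : Disjoint N M := disjoint_iff.mpr hNM2
  have hmul : (N : Set G) * (M : Set G) = Set.univ := by
    rw [← Subgroup.normal_mul, hsup, Subgroup.coe_top]
  have hcomp : Subgroup.IsComplement' N M :=
    Subgroup.isComplement'_of_disjoint_and_mul_eq_univ hdisj hmul
  have hcardG : Nat.card N * Nat.card M = Nat.card G := hcomp.card_mul
  -- M embeds into Aut(N)
  haveI : Fact p.Prime := ⟨hp⟩
  haveI : IsCyclic ↥N := isCyclic_of_prime_card hcardN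
  set ψ : ↥M →* MulAut ↥N := MulAut.conjNormal.comp M.subtype with hψdef
  have hψinj : Function.Injective ψ := by
    rw [injective_iff_map_eq_one]
    intro m hm
    have hmC : (m : G) ∈ C := by
      rw [Subgroup.mem_centralizer_iff]
      intro n hn
      have h1 : ψ m ⟨n, hn⟩ = ⟨n, hn⟩ := by rw [hm]; rfl
      have h2 : (m : G) * n * (m : G)⁻¹ = n := by
        have := congrArg Subtype.val h1
        simpa [hψdef, MulAut.conjNormal_apply] using this
      calc n * (m : G) = ((m : G) * n * (m : G)⁻¹) * (m : G) := by rw [h2]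
        _ = (m : G) * n := by group
    have : (m : G) ∈ C ⊓ M := ⟨hmC, m.2⟩
    rw [hCM, Subgroup.mem_bot] at this
    exact Subtype.ext this
  have hMdvd : Nat.card M ∣ p - 1 := by
    have h1 : Nat.card M ∣ Nat.card (MulAut ↥N) := Subgroup.card_dvd_of_injective ψ hψinj
    rwa [IsCyclic.card_mulAut, hcardN, Nat.totient_prime hp] at h1
  have hMpos : 0 < Nat.card M := Nat.card_pos
  have hp1pos : 0 < p - 1 := by have := hp.two_le; omega
  -- largest prime
  have hforall : ∀ q : ℕ, q.Prime → q ∣ Nat.card G → q ≤ p := by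
    intro q hq hqd
    rw [← hcardG, hcardN] at hqd
    rcases (Nat.Prime.dvd_mul hq).mp hqd with h1 | h1
    · exact le_of_eq ((Nat.prime_dvd_prime_iff_eq hq hp).mp h1)
    · have := Nat.le_of_dvd hp1pos (h1.trans hMdvd)
      omega
  -- p does not divide |M|
  have hndvd : ¬p ∣ Nat.card M := by
    intro hd
    have := Nat.le_of_dvd hp1pos (hd.trans hMdvd)
    omega
  -- Sylow subgroup
  have hpgrp : IsPGroup p ↥N := IsPGroup.of_card (by rw [hcardN, pow_one])
  obtain ⟨P, hP⟩ := hpgrp.exists_le_sylow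
  have hfact : (Nat.card G).factorization p = 1 := by
    rw [← hcardG, hcardN, Nat.factorization_mul hp.ne_zero hMpos.ne', Finsupp.add_apply,
      Nat.Prime.factorization_self hp, Nat.factorization_eq_zero_of_not_dvd hndvd]
  have hcardP : Nat.card (P : Subgroup G) = p := by
    rw [Sylow.card_eq_multiplicity, hfact, pow_one]
  have hNP : N = (P : Subgroup G) :=
    Subgroup.eq_of_le_of_card_ge hP (by rw [hcardP, hcardN])
  refine ⟨goal1, goal2, p, hp, by rw [hfitN, hcardN], ⟨?_, hforall⟩, P, by rw [← hNP, hfitN]⟩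
  rw [← hcardN]
  exact Subgroup.card_subgroup_dvd_card N
end
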